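/- arXiv:2105.00017 — 2 statements merged into one kernel-verified Lean document; each statement's English description precedes it below -/
import Mathlib

section
/- Suppose 0 < γ < π, 0 ≤ δ_L < π/2, 0 ≤ δ_R < π/2, and define γ_L = arctan((1 − cos γ + sin γ · tan δ_R)/(sin γ + cos γ · tan δ_R + tan δ_L)) and γ_R = arctan((1 − cos γ + sin γ · tan δ_L)/(sin γ + cos γ · tan δ_L + tan δ_R)), assuming both denominators are positive. Then 1/(cos γ_L − sin γ_L · tan δ_L) = 1/(cos γ_R − sin γ_R · tan δ_R). -/
open Real

lemma aux_cos_sub_sin (a b t : ℝ) (hb : 0 < b) :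
    cos (arctan (a / b)) - sin (arctan (a / b)) * t
      = (b - a * t) / Real.sqrt (b ^ 2 + a ^ 2) := by
  rw [Real.cos_arctan, Real.sin_arctan]
  have hE : b ^ 2 + a ^ 2 = b ^ 2 * (1 + (a / b) ^ 2) := by
    field_simp
  have hs : Real.sqrt (b ^ 2 + a ^ 2) = b * Real.sqrt (1 + (a / b) ^ 2) := by
    rw [hE, Real.sqrt_mul (sq_nonneg b), Real.sqrt_sq hb.le]
  rw [hs]
  have hpos : 0 < Real.sqrt (1 + (a / b) ^ 2) := by positivity
  field_simp

theorem r_symmetric (γ δL δR : ℝ)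
    (hγ : 0 < γ) (hγ' : γ < π)
    (hδL : 0 ≤ δL) (hδL' : δL < π / 2)
    (hδR : 0 ≤ δR) (hδR' : δR < π / 2)
    (hsum : γ + δL + δR < π)
    (hdenL : sin γ + cos γ * tan δR + tan δL > 0)
    (hdenR : sin γ + cos γ * tan δL + tan δR > 0)
    (γL γR : ℝ)
    (hγL : γL = arctan ((1 - cos γ + sin γ * tan δR) /
        (sin γ + cos γ * tan δR + tan δL)))
    (hγR : γR = arctan ((1 - cos γ + sin γ * tan δL) /
        (sin γ + cos γ * tan δL + tan δR))) :
    1 / (cos γL - sin γL * tan δL) = 1 / (cos γR - sin γR * tan δR) := by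
  set s := sin γ
  set c := cos γ
  set tL := tan δL
  set tR := tan δR
  have h1 : cos γL - sin γL * tL
      = ((s + c * tR + tL) - (1 - c + s * tR) * tL) /
        Real.sqrt ((s + c * tR + tL) ^ 2 + (1 - c + s * tR) ^ 2) := by
    rw [hγL]; exact aux_cos_sub_sin _ _ _ hdenL
  have h2 : cos γR - sin γR * tR
      = ((s + c * tL + tR) - (1 - c + s * tL) * tR) /
        Real.sqrt ((s + c * tL + tR) ^ 2 + (1 - c + s * tL) ^ 2) := by
    rw [hγR]; exact aux_cos_sub_sin _ _ _ hdenR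
  have hpyth : s ^ 2 + c ^ 2 = 1 := sin_sq_add_cos_sq γ
  have hnum : (s + c * tR + tL) - (1 - c + s * tR) * tL
      = (s + c * tL + tR) - (1 - c + s * tL) * tR := by ring
  have harg : (s + c * tR + tL) ^ 2 + (1 - c + s * tR) ^ 2
      = (s + c * tL + tR) ^ 2 + (1 - c + s * tL) ^ 2 := by
    linear_combination (tR ^ 2 - tL ^ 2) * hpyth
  rw [h1, h2, hnum, harg]
end

section
/- Let γ, δ_L, δ_R be real with 0 < γ < π, δ_L, δ_R ∈ [0, π/2), and suppose tan γ_L = (1 − cos γ + sin γ tan δ_R)/(sin γ + cos γ tan δ_R + tan δ_L) and tan γ_R = (1 − cos γ + sin γ tan δ_L)/(sin γ + cos γ tan δ_L + tan δ_R) with γ_L, γ_R ∈ (0, π/2) and both denominators positive. Then γ_L + γ_R = γ. -/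
set_option maxHeartbeats 1000000


open Real

theorem gammaL_add_gammaR (γ δL δR γL γR : ℝ)
    (hγ : 0 < γ) (hγ' : γ < π)
    (hδL : 0 ≤ δL) (hδL' : δL < π / 2)
    (hδR : 0 ≤ δR) (hδR' : δR < π / 2)
    (hsum : γ + δL + δR < π)
    (hγL : 0 < γL) (hγL' : γL < π / 2)
    (hγR : 0 < γR) (hγR' : γR < π / 2)
    (hdenL : sin γ + cos γ * tan δR + tan δL > 0)
    (hdenR : sin γ + cos γ * tan δL + tan δR > 0)
    (htL : tan γL = (1 - cos γ + sin γ * tan δR) /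
        (sin γ + cos γ * tan δR + tan δL))
    (htR : tan γR = (1 - cos γ + sin γ * tan δL) /
        (sin γ + cos γ * tan δL + tan δR)) :
    γL + γR = γ := by
  have hpi := Real.pi_pos
  have hcL : 0 < cos γL := Real.cos_pos_of_mem_Ioo ⟨by linarith, hγL'⟩
  have hcR : 0 < cos γR := Real.cos_pos_of_mem_Ioo ⟨by linarith, hγR'⟩
  have hcA : 0 < cos δL := Real.cos_pos_of_mem_Ioo ⟨by linarith, hδL'⟩
  have hcB : 0 < cos δR := Real.cos_pos_of_mem_Ioo ⟨by linarith, hδR'⟩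
  set s := sin γ with hs
  set c := cos γ with hc
  set sL := sin γL with hsL
  set cL := cos γL with hcLdef
  set sR := sin γR with hsRdef
  set cR := cos γR with hcRdef
  set aS := sin δL with haS
  set aC := cos δL with haC
  set bS := sin δR with hbS
  set bC := cos δR with hbC
  -- polynomial forms of the two tangent equations
  have eL : sL * (s * aC * bC + c * bS * aC + aS * bC)
      = cL * ((1 - c) * aC * bC + s * bS * aC) := by
    rw [eq_div_iff (ne_of_gt hdenL)] at htL
    rw [tan_eq_sin_div_cos, tan_eq_sin_div_cos, tan_eq_sin_div_cos] at htL
    rw [← hsL, ← hcLdef, ← hbS, ← hbC, ← haS, ← haC] at htL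
    field_simp at htL
    have h2 : bC * (sL * (s * aC * bC + c * bS * aC + aS * bC))
        = bC * (cL * ((1 - c) * aC * bC + s * bS * aC)) := by
      linear_combination bC * htL
    exact mul_left_cancel₀ (ne_of_gt hcB) h2
  have eR : sR * (s * aC * bC + c * aS * bC + bS * aC)
      = cR * ((1 - c) * aC * bC + s * aS * bC) := by
    rw [eq_div_iff (ne_of_gt hdenR)] at htR
    rw [tan_eq_sin_div_cos, tan_eq_sin_div_cos, tan_eq_sin_div_cos] at htR
    rw [← hsRdef, ← hcRdef, ← hbS, ← hbC, ← haS, ← haC] at htR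
    field_simp at htR
    have h2 : aC * (sR * (s * aC * bC + c * aS * bC + bS * aC))
        = aC * (cR * ((1 - c) * aC * bC + s * aS * bC)) := by
      linear_combination aC * htR
    exact mul_left_cancel₀ (ne_of_gt hcA) h2
  set DL := s * aC * bC + c * bS * aC + aS * bC with hDLdef
  set DR := s * aC * bC + c * aS * bC + bS * aC with hDRdef
  set NL := (1 - c) * aC * bC + s * bS * aC with hNLdef
  set NR := (1 - c) * aC * bC + s * aS * bC with hNRdef
  have hDLpos : 0 < DL := by
    have : DL = aC * bC * (s + c * (bS / bC) + aS / aC) := by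
      field_simp; ring
    rw [this]
    have h1 : 0 < s + c * (bS / bC) + aS / aC := by
      rw [tan_eq_sin_div_cos, tan_eq_sin_div_cos] at hdenL
      linarith
    positivity
  have hDRpos : 0 < DR := by
    have : DR = aC * bC * (s + c * (aS / aC) + bS / bC) := by
      field_simp; ring
    rw [this]
    have h1 : 0 < s + c * (aS / aC) + bS / bC := by
      rw [tan_eq_sin_div_cos, tan_eq_sin_div_cos] at hdenR
      linarith
    positivity
  have hp : s ^ 2 + c ^ 2 = 1 := sin_sq_add_cos_sq γ
  have key2 : ((sL * cR + cL * sR) * c - (cL * cR - sL * sR) * s) * (DL * DR) = 0 := by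
    linear_combination (c * cR * DR + s * sR * DR) * eL
      + (c * cL * DL + s * cL * NL) * eR
      + (cL * cR * (-c * aC ^ 2 * bS * bC - c * aS * aC * bC ^ 2
          - s * aC ^ 2 * bC ^ 2 + s * aS * aC * bS * bC)) * hp
  have key : sin (γL + γR - γ) = 0 := by
    have h0 : (sL * cR + cL * sR) * c - (cL * cR - sL * sR) * s = 0 := by
      have := mul_pos hDLpos hDRpos
      rcases mul_eq_zero.mp key2 with h | h
      · exact h
      · exact absurd h (ne_of_gt this)
    rw [sin_sub, sin_add, cos_add]
    linear_combination h0
  have hrange : γL + γR - γ ∈ Set.Ioo (-π) π := by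
    constructor <;> [linarith; linarith]
  have := Real.sin_eq_zero_iff_of_lt_of_lt hrange.1 hrange.2
  have h := this.mp key
  linarith
end
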